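/- arXiv:2005.01892 — 3 statements merged into one kernel-verified Lean document; each statement's English description precedes it below -/
import Mathlib

section
/- The probability measure μ on [0,π] with μ(A) = (1/2)∫_A sin(θ) dθ is invariant for the Feres random map: for every Borel set A ⊆ [0,π], μ(A) = Σ_{i=1}^4 ∫_{T_i^{-1}(A)} p_i(θ) dμ(θ). -/
open Real MeasureTheory Set Filter Topology
open scoped ENNReal NNReal

noncomputable section

namespace RandomBilliard

/-- The four maps `T_1, …, T_4` of the Feres random map
(index `i : Fin 4` stands for `T_{i+1}`). -/
def T (α : ℝ) : Fin 4 → ℝ → ℝ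
  | 0 => fun θ => θ + 2 * α
  | 1 => fun θ => -θ + 2 * π - 4 * α
  | 2 => fun θ => θ - 2 * α
  | 3 => fun θ => -θ + 4 * α

/-- `u_a(θ) = (1/2)(1 + tan a / tan θ)`. -/
def u (a θ : ℝ) : ℝ := 1 / 2 * (1 + Real.tan a / Real.tan θ)

/-- The probabilities `p_1, …, p_4` of the Feres random map
(index `i : Fin 4` stands for `p_{i+1}`). -/
def p (α : ℝ) : Fin 4 → ℝ → ℝ
  | 0 => fun θ =>
      if θ < α then 1
      else if θ < π - 3 * α then u α θ
      else if θ < π - 2 * α then 2 * Real.cos (2 * α) * u (2 * α) θ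
      else 0
  | 1 => fun θ =>
      if θ < π - 3 * α then 0
      else if θ < π - 2 * α then u α θ - 2 * Real.cos (2 * α) * u (2 * α) θ
      else if θ < π - α then u α θ
      else 0
  | 2 => fun θ =>
      if θ < 2 * α then 0
      else if θ < 3 * α then 2 * Real.cos (2 * α) * u (2 * α) (-θ)
      else if θ < π - α then u α (-θ)
      else 1
  | 3 => fun θ =>
      if θ < α then 0
      else if θ < 2 * α then u α (-θ)
      else if θ < 3 * α then u α (-θ) - 2 * Real.cos (2 * α) * u (2 * α) (-θ)
      else 0

/-- `iterT α x k θ = T_x^{(k)}(θ) = T_{x_k} ∘ ⋯ ∘ T_{x_1}(θ)`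
(the term `x j : Fin 4` stands for the symbol `x_{j+1}`). -/
def iterT (α : ℝ) (x : ℕ → Fin 4) : ℕ → ℝ → ℝ
  | 0 => fun θ => θ
  | k + 1 => fun θ => T α (x k) (iterT α x k θ)

/-- `Σ_θ`: the admissible symbol sequences for `θ`, i.e. those whose every finite
prefix has positive probability. -/
def SigmaTheta (α θ : ℝ) : Set (ℕ → Fin 4) :=
  {x | ∀ k : ℕ, 0 < ∏ j ∈ Finset.range k, p α (x j) (iterT α x j θ)}

/-- `C(θ)`: all possible future images of `θ` under the Feres random map. -/
def Cset (α θ : ℝ) : Set ℝ :=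
  {θ' | θ' ∈ Set.Ioo 0 π ∧
    ∃ (x : ℕ → Fin 4) (k : ℕ), x ∈ SigmaTheta α θ ∧ iterT α x k θ = θ'}

/-- The probability measure `μ(A) = (1/2) ∫_A sin θ dθ` on `[0, π]`. -/
def mu0 : Measure ℝ :=
  (volume.restrict (Set.Icc 0 π)).withDensity fun θ => ENNReal.ofReal (1 / 2 * Real.sin θ)

/-- One step of the evolution of a measure under the Feres random map:
`(stepMeasure α ν)(A) = ∫ K(θ, A) dν(θ)`, where `K(θ, A) = Σ_i p_i(θ) 1_A(T_i θ)`. -/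
def stepMeasure (α : ℝ) (ν : Measure ℝ) : Measure ℝ :=
  ∑ i : Fin 4, Measure.map (T α i) (ν.withDensity fun θ => ENNReal.ofReal (p α i θ))

/-- One step of the evolution of a measure under the random billiard map in the circle
`F̄(s, θ) = (s + 2 T_i(θ) mod 2π, T_i(θ))` with probability `p_i(θ)`. -/
def circleStep (α : ℝ) (ν : Measure (ℝ × ℝ)) : Measure (ℝ × ℝ) :=
  ∑ i : Fin 4,
    Measure.map
      (fun q : ℝ × ℝ => (toIcoMod Real.two_pi_pos 0 (q.1 + 2 * T α i q.2), T α i q.2))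
      (ν.withDensity fun q => ENNReal.ofReal (p α i q.2))

/-- The transition kernel `K(θ', ·) = Σ_i p_i(θ') δ_{T_i(θ')}` of the Feres random map. -/
def feresKernel (α : ℝ) (t : ℝ) : Measure ℝ :=
  ∑ i : Fin 4, ENNReal.ofReal (p α i t) • Measure.dirac (T α i t)

/-- `k`-step iterates of a transition kernel. -/
def kerIterate (κ : ℝ → Measure ℝ) : ℕ → ℝ → Measure ℝ
  | 0 => fun t => Measure.dirac t
  | k + 1 => fun t => (κ t).bind (kerIterate κ k)

/-- The probability that a Markov chain with kernel `κ` started at `t` satisfies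
`θ_0 ∈ B 0, …, θ_n ∈ B n`. -/
def cylProb (κ : ℝ → Measure ℝ) : ℕ → (ℕ → Set ℝ) → ℝ → ℝ≥0∞
  | 0 => fun B t => Set.indicator (B 0) (fun _ => (1 : ℝ≥0∞)) t
  | n + 1 => fun B t =>
      Set.indicator (B 0)
        (fun _ => ∫⁻ t', cylProb κ n (fun k => B (k + 1)) t' ∂(κ t)) t

/-- `ν` is the Markov path measure on `ℕ → ℝ` (given by the Ionescu–Tulcea construction)
with initial distribution `ρ` and transition kernel `κ`, characterized by its values
on cylinder sets. -/
def IsMarkovPathMeasure (κ : ℝ → Measure ℝ) (ρ : Measure ℝ) (ν : Measure (ℕ → ℝ)) : Prop :=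
  ∀ (n : ℕ) (B : ℕ → Set ℝ), (∀ k, MeasurableSet (B k)) →
    ν {ω | ∀ k ≤ n, ω k ∈ B k} = ∫⁻ t, cylProb κ n B t ∂ρ

/-- The shift map on sequences. -/
def shift : (ℕ → ℝ) → ℕ → ℝ := fun ω n => ω (n + 1)

/-- Aperiodicity of the Markov chain with kernel `κ` on the state space `S`:
for every state, every common divisor of the return times having positive
probability equals `1` (i.e. every state has period 1). -/
def AperiodicChain (κ : ℝ → Measure ℝ) (S : Set ℝ) : Prop :=
  ∀ t ∈ S, ∀ d : ℕ, (∀ k : ℕ, 1 ≤ k → 0 < kerIterate κ k t {t} → d ∣ k) → d = 1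

end RandomBilliard

open RandomBilliard

/-!
Every branch `T_i` is an affine isometry of `ℝ`, so `∑ᵢ (T_i)_*(p_i μ)` has density
`(1/2) ∑ᵢ w_i (T_i⁻¹ φ)` with `w_i = sin · p_i` on `[0, π]` and `0` outside. Invariance is thus
the identity `∑ᵢ w_i (T_i⁻¹ φ) = sin φ` on `[0, π]` (the left side vanishes outside), needed only
away from the break points `α, 2α, 3α, π - 3α, π - 2α, π - α`. As
`2 cos a · sin θ · u_a(θ) = sin (θ + a)`, between two break points each `w_i (T_i⁻¹ φ)` is, up to
the factor `2 cos α`, the sine of an affine function of `φ`, and the identity reduces to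
`sin (x + α) + sin (x - α) = 2 cos α sin x`.
-/

namespace RandomBilliard

def Tinv (α : ℝ) : Fin 4 → ℝ → ℝ
  | 0 => fun φ => φ - 2 * α
  | 1 => fun φ => -φ + 2 * π - 4 * α
  | 2 => fun φ => φ + 2 * α
  | 3 => fun φ => -φ + 4 * α

theorem Tinv_T (α : ℝ) (i : Fin 4) (θ : ℝ) : Tinv α i (T α i θ) = θ := by
  fin_cases i <;> simp only [Tinv, T] <;> ring

theorem measurable_Tinv (α : ℝ) (i : Fin 4) : Measurable (Tinv α i) := by
  fin_cases i <;> simp only [Tinv] <;> fun_prop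

theorem exists_T_eq_add_or_sub (α : ℝ) (i : Fin 4) :
    ∃ c, T α i = (· + c) ∨ T α i = (c - ·) := by
  fin_cases i
  · exact ⟨2 * α, .inl rfl⟩
  · exact ⟨2 * π - 4 * α, .inr (by ext; simp only [T]; ring)⟩
  · exact ⟨-(2 * α), .inl (by ext; simp only [T]; ring)⟩
  · exact ⟨4 * α, .inr (by ext; simp only [T]; ring)⟩

theorem measurePreserving_T (α : ℝ) (i : Fin 4) : MeasurePreserving (T α i) := by
  obtain ⟨c, h | h⟩ := exists_T_eq_add_or_sub α i <;> rw [h]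
  · exact measurePreserving_add_right volume c
  · exact Measure.measurePreserving_sub_left volume c

theorem measurableEmbedding_T (α : ℝ) (i : Fin 4) : MeasurableEmbedding (T α i) := by
  obtain ⟨c, h | h⟩ := exists_T_eq_add_or_sub α i <;> rw [h]
  · exact measurableEmbedding_addRight c
  · exact measurableEmbedding_subLeft c

-- No side conditions: when `cos a = 0` or `sin θ = 0`, both sides are the junk value `1 / 2`.
theorem u_eq (a θ : ℝ) : u a θ = 1 / 2 * (1 + sin a * cos θ / (cos a * sin θ)) := by
  rw [u, tan_eq_sin_div_cos, tan_eq_sin_div_cos, div_div_div_eq, mul_comm (cos a)]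

@[fun_prop]
theorem measurable_u (a : ℝ) : Measurable (u a) := by
  simp_rw [funext (u_eq a)]
  fun_prop

@[fun_prop]
theorem measurable_p (α : ℝ) (i : Fin 4) : Measurable (p α i) := by
  fin_cases i <;> simp only [p] <;>
    exact .ite measurableSet_Iio (by fun_prop)
      (.ite measurableSet_Iio (by fun_prop) (.ite measurableSet_Iio (by fun_prop) (by fun_prop)))

theorem two_mul_cos_mul_sin_mul_u {a θ : ℝ} (ha : cos a ≠ 0) (hθ : sin θ ≠ 0) :
    2 * cos a * (sin θ * u a θ) = sin (θ + a) := by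
  rw [u_eq, sin_add]
  field_simp

theorem two_mul_cos_mul_sin_mul_u_neg {a θ : ℝ} (ha : cos a ≠ 0) (hθ : sin θ ≠ 0) :
    2 * cos a * (sin θ * u a (-θ)) = sin (θ - a) := by
  have h := two_mul_cos_mul_sin_mul_u ha (θ := -θ) (by rwa [sin_neg, neg_ne_zero])
  rw [sin_neg, neg_add_eq_sub, ← neg_sub, sin_neg] at h
  linear_combination -h

/-- `flux α i / 2` is the Lebesgue density of `p_i dμ`, the part of `μ` that moves along `T_i`. -/
def flux (α : ℝ) (i : Fin 4) : ℝ → ℝ := (Icc 0 π).indicator fun θ => sin θ * p α i θ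

/-- `inflow α i / 2` is the density of the image of `p_i dμ` under `T_i`. -/
def inflow (α : ℝ) (i : Fin 4) (φ : ℝ) : ℝ := flux α i (Tinv α i φ)

section

variable {α φ : ℝ}

theorem flux_of_mem {θ : ℝ} (i : Fin 4) (h : θ ∈ Icc 0 π) : flux α i θ = sin θ * p α i θ :=
  indicator_of_mem h _

theorem flux_eq_zero {i : Fin 4} {θ : ℝ} (h : θ ∈ Icc 0 π → p α i θ = 0) : flux α i θ = 0 := by
  by_cases hθ : θ ∈ Icc 0 π
  · rw [flux_of_mem i hθ, h hθ, mul_zero]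
  · exact indicator_of_notMem hθ _

theorem inflow_zero_eq_zero (hα₀ : 0 < α) (hα₆ : α < π / 6) (h : φ < 2 * α ∨ π ≤ φ) :
    inflow α 0 φ = 0 := by
  simp only [inflow, Tinv]
  refine flux_eq_zero fun hθ => ?_
  simp only [p]
  rcases h with h | h
  · exact absurd hθ.1 (by linarith)
  · rw [if_neg (by linarith), if_neg (by linarith), if_neg (by linarith)]

theorem inflow_zero_eq_sin_sub (hα₆ : α < π / 6) (h₁ : 2 * α ≤ φ) (h₂ : φ < 3 * α) :
    inflow α 0 φ = sin (φ - 2 * α) := by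
  simp only [inflow, Tinv]
  rw [flux_of_mem 0 ⟨by linarith, by linarith⟩]
  simp only [p]
  rw [if_pos (by linarith), mul_one]

theorem two_mul_cos_mul_inflow_zero (hα₀ : 0 < α) (hα₆ : α < π / 6) (h₁ : 3 * α ≤ φ)
    (h₂ : φ < π - α) : 2 * cos α * inflow α 0 φ = sin (φ - α) := by
  simp only [inflow, Tinv]
  rw [flux_of_mem 0 ⟨by linarith, by linarith⟩]
  simp only [p]
  rw [if_neg (by linarith), if_pos (by linarith),
    two_mul_cos_mul_sin_mul_u (cos_pos_of_mem_Ioo ⟨by linarith, by linarith⟩).ne'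
      (sin_pos_of_pos_of_lt_pi (by linarith) (by linarith)).ne']
  ring_nf

theorem inflow_zero_eq_sin (hα₀ : 0 < α) (hα₆ : α < π / 6) (h₁ : π - α ≤ φ) (h₂ : φ < π) :
    inflow α 0 φ = sin φ := by
  simp only [inflow, Tinv]
  rw [flux_of_mem 0 ⟨by linarith, by linarith⟩]
  simp only [p]
  rw [if_neg (by linarith), if_neg (by linarith), if_pos (by linarith), mul_left_comm,
    two_mul_cos_mul_sin_mul_u (cos_pos_of_mem_Ioo ⟨by linarith, by linarith⟩).ne'
      (sin_pos_of_pos_of_lt_pi (by linarith) (by linarith)).ne', sub_add_cancel]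

theorem inflow_one_eq_zero (hα₀ : 0 < α) (h : φ ≤ π - 3 * α ∨ π - α < φ) :
    inflow α 1 φ = 0 := by
  simp only [inflow, Tinv]
  refine flux_eq_zero fun _ => ?_
  simp only [p]
  rcases h with h | h
  · rw [if_neg (by linarith), if_neg (by linarith), if_neg (by linarith)]
  · rw [if_pos (by linarith)]

theorem two_mul_cos_mul_inflow_one_eq_neg_sin (hα₀ : 0 < α) (hα₆ : α < π / 6)
    (h₁ : π - 3 * α < φ) (h₂ : φ ≤ π - 2 * α) :
    2 * cos α * inflow α 1 φ = -sin (φ + 3 * α) := by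
  simp only [inflow, Tinv]
  rw [flux_of_mem 1 ⟨by linarith, by linarith⟩]
  simp only [p]
  rw [if_neg (by linarith), if_neg (by linarith), if_pos (by linarith),
    two_mul_cos_mul_sin_mul_u (cos_pos_of_mem_Ioo ⟨by linarith, by linarith⟩).ne'
      (sin_pos_of_pos_of_lt_pi (by linarith) (by linarith)).ne',
    show -φ + 2 * π - 4 * α + α = -(φ + 3 * α) + 2 * π by ring, sin_add_two_pi, sin_neg]

theorem two_mul_cos_mul_inflow_one_eq_sin (hα₀ : 0 < α) (hα₆ : α < π / 6)
    (h₁ : π - 2 * α < φ) (h₂ : φ ≤ π - α) : 2 * cos α * inflow α 1 φ = sin (φ + α) := by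
  simp only [inflow, Tinv]
  rw [flux_of_mem 1 ⟨by linarith, by linarith⟩]
  simp only [p]
  rw [if_neg (by linarith), if_pos (by linarith)]
  have hs : sin (-φ + 2 * π - 4 * α) ≠ 0 :=
    (sin_pos_of_pos_of_lt_pi (by linarith) (by linarith)).ne'
  have e₁ := two_mul_cos_mul_sin_mul_u (a := α)
    (cos_pos_of_mem_Ioo ⟨by linarith, by linarith⟩).ne' hs
  have e₂ := two_mul_cos_mul_sin_mul_u (a := 2 * α)
    (cos_pos_of_mem_Ioo ⟨by linarith, by linarith⟩).ne' hs
  rw [show -φ + 2 * π - 4 * α + α = -(φ + 3 * α) + 2 * π by ring, sin_add_two_pi, sin_neg] at e₁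
  rw [show -φ + 2 * π - 4 * α + 2 * α = -(φ + 2 * α) + 2 * π by ring, sin_add_two_pi,
    sin_neg] at e₂
  linear_combination (norm := ring_nf) e₁ - 2 * cos α * e₂ + two_mul_sin_mul_cos (φ + 2 * α) α

theorem inflow_two_eq_zero (h : φ < 0 ∨ π - 2 * α < φ) : inflow α 2 φ = 0 := by
  simp only [inflow, Tinv]
  refine flux_eq_zero fun hθ => ?_
  simp only [p]
  rcases h with h | h
  · rw [if_pos (by linarith)]
  · exact absurd hθ.2 (by linarith)

theorem inflow_two_eq_sin (hα₀ : 0 < α) (hα₆ : α < π / 6) (h₁ : 0 ≤ φ) (h₂ : φ < α) :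
    inflow α 2 φ = sin φ := by
  simp only [inflow, Tinv]
  rw [flux_of_mem 2 ⟨by linarith, by linarith⟩]
  simp only [p]
  rw [if_neg (by linarith), if_pos (by linarith), mul_left_comm,
    two_mul_cos_mul_sin_mul_u_neg (cos_pos_of_mem_Ioo ⟨by linarith, by linarith⟩).ne'
      (sin_pos_of_pos_of_lt_pi (by linarith) (by linarith)).ne', add_sub_cancel_right]

theorem two_mul_cos_mul_inflow_two (hα₀ : 0 < α) (hα₆ : α < π / 6) (h₁ : α ≤ φ)
    (h₂ : φ < π - 3 * α) : 2 * cos α * inflow α 2 φ = sin (φ + α) := by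
  simp only [inflow, Tinv]
  rw [flux_of_mem 2 ⟨by linarith, by linarith⟩]
  simp only [p]
  rw [if_neg (by linarith), if_neg (by linarith), if_pos (by linarith),
    two_mul_cos_mul_sin_mul_u_neg (cos_pos_of_mem_Ioo ⟨by linarith, by linarith⟩).ne'
      (sin_pos_of_pos_of_lt_pi (by linarith) (by linarith)).ne']
  ring_nf

theorem inflow_two_eq_sin_add (hα₀ : 0 < α) (hα₆ : α < π / 6) (h₁ : π - 3 * α ≤ φ)
    (h₂ : φ ≤ π - 2 * α) : inflow α 2 φ = sin (φ + 2 * α) := by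
  simp only [inflow, Tinv]
  rw [flux_of_mem 2 ⟨by linarith, by linarith⟩]
  simp only [p]
  rw [if_neg (by linarith), if_neg (by linarith), if_neg (by linarith), mul_one]

theorem inflow_three_eq_zero (hα₀ : 0 < α) (h : φ ≤ α ∨ 3 * α < φ) : inflow α 3 φ = 0 := by
  simp only [inflow, Tinv]
  refine flux_eq_zero fun _ => ?_
  simp only [p]
  rcases h with h | h
  · rw [if_neg (by linarith), if_neg (by linarith), if_neg (by linarith)]
  · rw [if_pos (by linarith)]

theorem two_mul_cos_mul_inflow_three_eq_sin (hα₀ : 0 < α) (hα₆ : α < π / 6) (h₁ : α < φ)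
    (h₂ : φ ≤ 2 * α) : 2 * cos α * inflow α 3 φ = sin (φ - α) := by
  simp only [inflow, Tinv]
  rw [flux_of_mem 3 ⟨by linarith, by linarith⟩]
  simp only [p]
  rw [if_neg (by linarith), if_neg (by linarith), if_pos (by linarith)]
  have hs : sin (-φ + 4 * α) ≠ 0 := (sin_pos_of_pos_of_lt_pi (by linarith) (by linarith)).ne'
  have e₁ := two_mul_cos_mul_sin_mul_u_neg (a := α)
    (cos_pos_of_mem_Ioo ⟨by linarith, by linarith⟩).ne' hs
  have e₂ := two_mul_cos_mul_sin_mul_u_neg (a := 2 * α)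
    (cos_pos_of_mem_Ioo ⟨by linarith, by linarith⟩).ne' hs
  linear_combination (norm := ring_nf) e₁ - 2 * cos α * e₂ - two_mul_sin_mul_cos (2 * α - φ) α
    - sin_neg (φ - α)

theorem two_mul_cos_mul_inflow_three_eq_neg_sin (hα₀ : 0 < α) (hα₆ : α < π / 6)
    (h₁ : 2 * α < φ) (h₂ : φ ≤ 3 * α) : 2 * cos α * inflow α 3 φ = -sin (φ - 3 * α) := by
  simp only [inflow, Tinv]
  rw [flux_of_mem 3 ⟨by linarith, by linarith⟩]
  simp only [p]
  rw [if_neg (by linarith), if_pos (by linarith),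
    two_mul_cos_mul_sin_mul_u_neg (cos_pos_of_mem_Ioo ⟨by linarith, by linarith⟩).ne'
      (sin_pos_of_pos_of_lt_pi (by linarith) (by linarith)).ne', ← sin_neg]
  ring_nf

theorem inflow_zero_nonneg (hα₀ : 0 < α) (hα₆ : α < π / 6) (φ : ℝ) : 0 ≤ inflow α 0 φ := by
  have hc : 0 < 2 * cos α := mul_pos two_pos (cos_pos_of_mem_Ioo ⟨by linarith, by linarith⟩)
  rcases lt_or_ge φ (2 * α) with h₁ | h₁
  · exact (inflow_zero_eq_zero hα₀ hα₆ (.inl h₁)).ge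
  rcases lt_or_ge φ (3 * α) with h₂ | h₂
  · rw [inflow_zero_eq_sin_sub hα₆ h₁ h₂]
    exact sin_nonneg_of_nonneg_of_le_pi (by linarith) (by linarith)
  rcases lt_or_ge φ (π - α) with h₃ | h₃
  · rw [← mul_nonneg_iff_of_pos_left hc, two_mul_cos_mul_inflow_zero hα₀ hα₆ h₂ h₃]
    exact sin_nonneg_of_nonneg_of_le_pi (by linarith) (by linarith)
  rcases lt_or_ge φ π with h₄ | h₄
  · rw [inflow_zero_eq_sin hα₀ hα₆ h₃ h₄]
    exact sin_nonneg_of_nonneg_of_le_pi (by linarith) (by linarith)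
  · exact (inflow_zero_eq_zero hα₀ hα₆ (.inr h₄)).ge

theorem inflow_one_nonneg (hα₀ : 0 < α) (hα₆ : α < π / 6) (φ : ℝ) : 0 ≤ inflow α 1 φ := by
  have hc : 0 < 2 * cos α := mul_pos two_pos (cos_pos_of_mem_Ioo ⟨by linarith, by linarith⟩)
  rcases le_or_gt φ (π - 3 * α) with h₁ | h₁
  · exact (inflow_one_eq_zero hα₀ (.inl h₁)).ge
  rcases le_or_gt φ (π - 2 * α) with h₂ | h₂
  · rw [← mul_nonneg_iff_of_pos_left hc, two_mul_cos_mul_inflow_one_eq_neg_sin hα₀ hα₆ h₁ h₂,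
      ← sin_sub_pi]
    exact sin_nonneg_of_nonneg_of_le_pi (by linarith) (by linarith)
  rcases le_or_gt φ (π - α) with h₃ | h₃
  · rw [← mul_nonneg_iff_of_pos_left hc, two_mul_cos_mul_inflow_one_eq_sin hα₀ hα₆ h₂ h₃]
    exact sin_nonneg_of_nonneg_of_le_pi (by linarith) (by linarith)
  · exact (inflow_one_eq_zero hα₀ (.inr h₃)).ge

theorem inflow_two_nonneg (hα₀ : 0 < α) (hα₆ : α < π / 6) (φ : ℝ) : 0 ≤ inflow α 2 φ := by
  have hc : 0 < 2 * cos α := mul_pos two_pos (cos_pos_of_mem_Ioo ⟨by linarith, by linarith⟩)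
  rcases lt_or_ge φ 0 with h₁ | h₁
  · exact (inflow_two_eq_zero (.inl h₁)).ge
  rcases lt_or_ge φ α with h₂ | h₂
  · rw [inflow_two_eq_sin hα₀ hα₆ h₁ h₂]
    exact sin_nonneg_of_nonneg_of_le_pi h₁ (by linarith)
  rcases lt_or_ge φ (π - 3 * α) with h₃ | h₃
  · rw [← mul_nonneg_iff_of_pos_left hc, two_mul_cos_mul_inflow_two hα₀ hα₆ h₂ h₃]
    exact sin_nonneg_of_nonneg_of_le_pi (by linarith) (by linarith)
  rcases le_or_gt φ (π - 2 * α) with h₄ | h₄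
  · rw [inflow_two_eq_sin_add hα₀ hα₆ h₃ h₄]
    exact sin_nonneg_of_nonneg_of_le_pi (by linarith) (by linarith)
  · exact (inflow_two_eq_zero (.inr h₄)).ge

theorem inflow_three_nonneg (hα₀ : 0 < α) (hα₆ : α < π / 6) (φ : ℝ) : 0 ≤ inflow α 3 φ := by
  have hc : 0 < 2 * cos α := mul_pos two_pos (cos_pos_of_mem_Ioo ⟨by linarith, by linarith⟩)
  rcases le_or_gt φ α with h₁ | h₁
  · exact (inflow_three_eq_zero hα₀ (.inl h₁)).ge
  rcases le_or_gt φ (2 * α) with h₂ | h₂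
  · rw [← mul_nonneg_iff_of_pos_left hc, two_mul_cos_mul_inflow_three_eq_sin hα₀ hα₆ h₁ h₂]
    exact sin_nonneg_of_nonneg_of_le_pi (by linarith) (by linarith)
  rcases le_or_gt φ (3 * α) with h₃ | h₃
  · rw [← mul_nonneg_iff_of_pos_left hc, two_mul_cos_mul_inflow_three_eq_neg_sin hα₀ hα₆ h₂ h₃,
      neg_nonneg]
    exact sin_nonpos_of_nonpos_of_neg_pi_le (by linarith) (by linarith)
  · exact (inflow_three_eq_zero hα₀ (.inr h₃)).ge

theorem inflow_nonneg (hα₀ : 0 < α) (hα₆ : α < π / 6) (i : Fin 4) (φ : ℝ) :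
    0 ≤ inflow α i φ := by
  fin_cases i
  exacts [inflow_zero_nonneg hα₀ hα₆ φ, inflow_one_nonneg hα₀ hα₆ φ, inflow_two_nonneg hα₀ hα₆ φ,
    inflow_three_nonneg hα₀ hα₆ φ]

theorem inflow_eq_zero_of_notMem_Icc (hα₀ : 0 < α) (hα₆ : α < π / 6) (i : Fin 4)
    (hφ : φ ∉ Icc 0 π) : inflow α i φ = 0 := by
  have h : φ < 0 ∨ π < φ := by rwa [mem_Icc, not_and_or, not_le, not_le] at hφ
  fin_cases i
  · exact inflow_zero_eq_zero hα₀ hα₆ (h.imp (fun _ => by linarith) le_of_lt)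
  · exact inflow_one_eq_zero hα₀ (h.imp (fun _ => by linarith) (fun _ => by linarith))
  · exact inflow_two_eq_zero (h.imp id (fun _ => by linarith))
  · exact inflow_three_eq_zero hα₀ (h.imp (fun _ => by linarith) (fun _ => by linarith))

theorem sum_inflow_of_lt_three_mul (hα₀ : 0 < α) (hα₆ : α < π / 6) (h₀ : 0 < φ)
    (h₃ : φ < 3 * α) (h₁ : φ ≠ α) (h₂ : φ ≠ 2 * α) : ∑ i, inflow α i φ = sin φ := by
  have hc : 2 * cos α ≠ 0 := (mul_pos two_pos (cos_pos_of_mem_Ioo ⟨by linarith, by linarith⟩)).ne'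
  rw [Fin.sum_univ_four, inflow_one_eq_zero hα₀ (.inl (by linarith))]
  rcases lt_or_gt_of_ne h₁ with h₁ | h₁
  · rw [inflow_zero_eq_zero hα₀ hα₆ (.inl (by linarith)), inflow_two_eq_sin hα₀ hα₆ h₀.le h₁,
      inflow_three_eq_zero hα₀ (.inl h₁.le)]
    ring
  apply mul_left_cancel₀ hc
  rcases lt_or_gt_of_ne h₂ with h₂ | h₂
  · rw [inflow_zero_eq_zero hα₀ hα₆ (.inl h₂)]
    linear_combination two_mul_cos_mul_inflow_two hα₀ hα₆ h₁.le (by linarith)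
      + two_mul_cos_mul_inflow_three_eq_sin hα₀ hα₆ h₁ h₂.le - two_mul_sin_mul_cos φ α
  · linear_combination (norm := ring_nf) 2 * cos α * inflow_zero_eq_sin_sub hα₆ h₂.le h₃
      + two_mul_cos_mul_inflow_two hα₀ hα₆ h₁.le (by linarith)
      + two_mul_cos_mul_inflow_three_eq_neg_sin hα₀ hα₆ h₂ h₃.le
      - two_mul_sin_mul_cos φ α + two_mul_sin_mul_cos (φ - 2 * α) α

theorem sum_inflow_of_three_mul_lt (hα₀ : 0 < α) (hα₆ : α < π / 6) (h₃ : 3 * α < φ)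
    (h₇ : φ < π) (h₄ : φ ≠ π - 3 * α) (h₅ : φ ≠ π - 2 * α) (h₆ : φ ≠ π - α) :
    ∑ i, inflow α i φ = sin φ := by
  have hc : 2 * cos α ≠ 0 := (mul_pos two_pos (cos_pos_of_mem_Ioo ⟨by linarith, by linarith⟩)).ne'
  rw [Fin.sum_univ_four, inflow_three_eq_zero hα₀ (.inr h₃)]
  rcases lt_or_gt_of_ne h₆ with h₆ | h₆
  swap
  · rw [inflow_zero_eq_sin hα₀ hα₆ h₆.le h₇, inflow_one_eq_zero hα₀ (.inr h₆),
      inflow_two_eq_zero (.inr (by linarith))]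
    ring
  apply mul_left_cancel₀ hc
  rcases lt_or_gt_of_ne h₄ with h₄ | h₄
  · rw [inflow_one_eq_zero hα₀ (.inl h₄.le)]
    linear_combination two_mul_cos_mul_inflow_zero hα₀ hα₆ h₃.le (by linarith)
      + two_mul_cos_mul_inflow_two hα₀ hα₆ (by linarith) h₄ - two_mul_sin_mul_cos φ α
  rcases lt_or_gt_of_ne h₅ with h₅ | h₅
  · linear_combination (norm := ring_nf)
      two_mul_cos_mul_inflow_zero hα₀ hα₆ (by linarith) (by linarith)
      + two_mul_cos_mul_inflow_one_eq_neg_sin hα₀ hα₆ h₄ h₅.le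
      + 2 * cos α * inflow_two_eq_sin_add hα₀ hα₆ h₄.le h₅.le
      - two_mul_sin_mul_cos φ α + two_mul_sin_mul_cos (φ + 2 * α) α
  · rw [inflow_two_eq_zero (.inr h₅)]
    linear_combination two_mul_cos_mul_inflow_zero hα₀ hα₆ (by linarith) h₆
      + two_mul_cos_mul_inflow_one_eq_sin hα₀ hα₆ h₅ h₆.le - two_mul_sin_mul_cos φ α

theorem ae_sum_inflow_eq (hα₀ : 0 < α) (hα₆ : α < π / 6) :
    ∀ᵐ φ, ∑ i, inflow α i φ = (Icc 0 π).indicator sin φ := by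
  have hnull : volume ({0, α, 2 * α, 3 * α, π - 3 * α, π - 2 * α, π - α, π} : Set ℝ) = 0 :=
    (toFinite _).measure_zero _
  filter_upwards [measure_eq_zero_iff_ae_notMem.1 hnull] with φ hφ
  simp only [mem_insert_iff, mem_singleton_iff, not_or] at hφ
  obtain ⟨h₀, h₁, h₂, h₃, h₄, h₅, h₆, h₇⟩ := hφ
  by_cases h : φ ∈ Icc 0 π
  · rw [indicator_of_mem h]
    rcases lt_or_gt_of_ne h₃ with h₃ | h₃
    · exact sum_inflow_of_lt_three_mul hα₀ hα₆ (h.1.lt_of_ne' h₀) h₃ h₁ h₂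
    · exact sum_inflow_of_three_mul_lt hα₀ hα₆ h₃ (h.2.lt_of_ne h₇) h₄ h₅ h₆
  · simp [indicator_of_notMem h, inflow_eq_zero_of_notMem_Icc hα₀ hα₆ _ h]

end

theorem mu0_eq_withDensity :
    mu0 = volume.withDensity fun φ => ENNReal.ofReal (1 / 2 * (Icc 0 π).indicator sin φ) := by
  rw [mu0, ← withDensity_indicator measurableSet_Icc]
  congr 1
  ext φ
  by_cases h : φ ∈ Icc 0 π <;> simp [h]

theorem measurable_inflow (α : ℝ) (i : Fin 4) : Measurable (inflow α i) :=
  ((by fun_prop : Measurable fun θ => sin θ * p α i θ).indicator measurableSet_Icc).comp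
    (measurable_Tinv α i)

theorem setLIntegral_preimage_T (α : ℝ) (i : Fin 4) (A : Set ℝ) :
    ∫⁻ θ in T α i ⁻¹' A, ENNReal.ofReal (p α i θ) ∂mu0
      = ∫⁻ φ in A, ENNReal.ofReal (1 / 2 * inflow α i φ) := by
  rw [mu0_eq_withDensity, restrict_withDensity',
    lintegral_withDensity_eq_lintegral_mul _
      ((measurable_sin.indicator measurableSet_Icc).const_mul _).ennreal_ofReal (by fun_prop)]
  refine Eq.trans (lintegral_congr fun θ => ?_)
    ((measurePreserving_T α i).setLIntegral_comp_preimage_emb (measurableEmbedding_T α i) _ A)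
  by_cases h : θ ∈ Icc 0 π
  · rw [Pi.mul_apply, inflow, Tinv_T, flux_of_mem i h, indicator_of_mem h, ← mul_assoc]
    exact (ENNReal.ofReal_mul (by linarith [sin_nonneg_of_mem_Icc h])).symm
  · simp [inflow, Tinv_T, flux, indicator_of_notMem h]

end RandomBilliard

theorem feres_measure_invariant_general (α : ℝ) (hα : α ∈ Set.Ioo 0 (π / 6))
    (A : Set ℝ) :
    mu0 A = ∑ i : Fin 4, ∫⁻ θ in T α i ⁻¹' A, ENNReal.ofReal (p α i θ) ∂mu0 := by
  obtain ⟨hα₀, hα₆⟩ := hα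
  simp_rw [setLIntegral_preimage_T]
  rw [mu0_eq_withDensity, withDensity_apply',
    ← lintegral_finsetSum _ fun i _ => ((measurable_inflow α i).const_mul _).ennreal_ofReal]
  refine lintegral_congr_ae (ae_restrict_of_ae ?_)
  filter_upwards [ae_sum_inflow_eq hα₀ hα₆] with φ hφ
  rw [← ENNReal.ofReal_sum_of_nonneg fun i _ =>
      mul_nonneg (by norm_num) (inflow_nonneg hα₀ hα₆ i φ),
    ← Finset.mul_sum, hφ]

/-- the measure `μ(A) = (1/2)∫_A sin θ dθ` is invariant for the Feres
random map: `μ(A) = Σ_{i=1}^4 ∫_{T_i⁻¹(A)} p_i(θ) dμ(θ)` for every Borel `A ⊆ [0, π]`. -/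
theorem feres_measure_invariant (α : ℝ) (hα : α ∈ Set.Ioo 0 (π / 6))
    (A : Set ℝ) (hA : MeasurableSet A) (hAsub : A ⊆ Set.Icc 0 π) :
    mu0 A = ∑ i : Fin 4, ∫⁻ θ in T α i ⁻¹' A, ENNReal.ofReal (p α i θ) ∂mu0 :=
  feres_measure_invariant_general α hα A
end
end

section
/- If α = βπ with β irrational, then for every θ ∈ (0,π) the set C(θ) is countably infinite. -/
/-
Every iterate is `±θ + mα + nπ`, so `C(θ)` is countable.

From every point of `(0, π)` one of the shifts `t ↦ t ± 2α` is admissible and stays in `(0, π)`,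
so every finite admissible path inside `(0, π)` extends to a sequence in `Σ_θ`. The shifts `t ↦ t ± 2α` are admissible on all of `(0, π)`, so as soon as one point of a class
`c + 2αℤ` is reached, all of its points in `(0, π)` are. The reflection `T_4`, admissible on
`(α, 3α)`, then reaches the class of `-c`, and `T_2`, admissible on `(π - 3α, π - α)`, the class of
`2π - c`, unless `c` lies on the left end of the window modulo `2α`. Composing the two moves the
class of `θ + 2πm` to that of `θ + 2π(m ± 1)`, and the move is blocked only if `θ + nπ ≡ α`
modulo `2α` for some `n` among `2m - 2, …, 2m + 1`. As `α / π` is irrational there is at most one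
such `n`, so one of the two directions is never blocked, and distinct `m` give distinct points.
-/

open Real MeasureTheory Set Filter Topology
open scoped ENNReal NNReal

noncomputable section

open RandomBilliard

namespace RandomBilliard

theorem modEq_iff_exists_int_mul {R : Type*} [Ring R] {p a b : R} :
    a ≡ b [PMOD p] ↔ ∃ z : ℤ, b - a = z * p := by
  simp only [AddCommGroup.modEq_iff_zsmul', zsmul_eq_mul]

theorem exists_modEq_mem_Ioo {G : Type*} [AddCommGroup G] [LinearOrder G] [IsOrderedAddMonoid G]
    [Archimedean G] {p a c : G} (hp : 0 < p) (h : ¬ a ≡ c [PMOD p]) :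
    ∃ w ∈ Ioo a (a + p), w ≡ c [PMOD p] := by
  obtain ⟨z, hz⟩ := not_forall_not.1 (mt (AddCommGroup.modEq_iff_forall_notMem_Ioo_mod hp).2 h)
  exact ⟨c - z • p, hz, AddCommGroup.modEq_iff_zsmul'.2 ⟨z, sub_sub_cancel c _⟩⟩

theorem int_eq_of_mul_pi_modEq {α β : ℝ} (hβ : Irrational β) (hαβ : α = β * π) {m n : ℤ}
    (h : m * π ≡ n * π [PMOD 2 * α]) : m = n := by
  obtain ⟨z, hz⟩ := modEq_iff_exists_int_mul.1 h
  rw [hαβ] at hz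
  have hnm : ((n - m : ℤ) : ℝ) = (2 * z : ℤ) * β := by
    push_cast
    apply mul_right_cancel₀ pi_ne_zero
    linarith
  by_cases h2z : 2 * z = 0
  · rw [h2z, Int.cast_zero, zero_mul, Int.cast_eq_zero, sub_eq_zero] at hnm
    exact hnm.symm
  · exact absurd hnm.symm ((hβ.intCast_mul h2z).ne_int _)

-- No condition on `cos t`: where it vanishes, Lean's `tan t` is `0` and both sides are `1 / 2`.
theorem u_eq_sin_div {a t : ℝ} (ha : cos a ≠ 0) (ht : sin t ≠ 0) :
    u a t = sin (t + a) / (2 * cos a * sin t) := by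
  rw [u, tan_eq_sin_div_cos a, tan_eq_sin_div_cos t, div_div_eq_mul_div, sin_add]
  field_simp

theorem u_neg (a t : ℝ) : u a (-t) = u a (π - t) := by
  simp only [u, tan_neg, tan_pi_sub]

theorem u_pos {a t : ℝ} (ha : a ∈ Ioo 0 (π / 2)) (ht : t ∈ Ioo 0 (π - a)) : 0 < u a t := by
  obtain ⟨ha₀, ha₁⟩ := ha
  obtain ⟨ht₀, ht₁⟩ := ht
  have hcos : 0 < cos a := cos_pos_of_mem_Ioo ⟨by linarith, ha₁⟩
  have hsin : 0 < sin t := sin_pos_of_pos_of_lt_pi ht₀ (by linarith)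
  rw [u_eq_sin_div hcos.ne' hsin.ne']
  have := sin_pos_of_pos_of_lt_pi (x := t + a) (by linarith) (by linarith)
  positivity

theorem cos_two_mul_pos {α : ℝ} (hα : α ∈ Ioo 0 (π / 4)) : 0 < cos (2 * α) :=
  cos_pos_of_mem_Ioo ⟨by linarith [hα.1, pi_pos], by linarith [hα.2]⟩

theorem u_sub_two_mul_cos_mul_u_eq {α t : ℝ} (h₁ : cos α ≠ 0) (h₂ : cos (2 * α) ≠ 0)
    (ht : sin t ≠ 0) :
    u α t - 2 * cos (2 * α) * u (2 * α) t = -sin (t + 3 * α) / (2 * cos α * sin t) := by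
  have hsum : sin (t + 3 * α) + sin (t + α) = 2 * cos α * sin (t + 2 * α) := by
    have hadd := sin_add (t + 2 * α) α
    have hsub := sin_sub (t + 2 * α) α
    rw [show t + 2 * α + α = t + 3 * α by ring] at hadd
    rw [show t + 2 * α - α = t + α by ring] at hsub
    linarith
  have hu₂ : 2 * cos (2 * α) * u (2 * α) t = sin (t + 2 * α) / sin t := by
    rw [u_eq_sin_div h₂ ht]
    field_simp
  rw [hu₂, u_eq_sin_div h₁ ht, div_sub_div _ _ (by positivity) ht,
    div_eq_div_iff (by positivity) (by positivity)]
  linear_combination (2 * cos α * sin t ^ 2) * hsum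

theorem u_sub_two_mul_cos_mul_u_pos {α t : ℝ} (hα : α ∈ Ioo 0 (π / 4))
    (ht : t ∈ Ioo (π - 3 * α) π) : 0 < u α t - 2 * cos (2 * α) * u (2 * α) t := by
  have hπ := pi_pos
  have hcos : 0 < cos α := cos_pos_of_mem_Ioo ⟨by linarith [hα.1], by linarith [hα.2]⟩
  have hsin : 0 < sin t := sin_pos_of_pos_of_lt_pi (by linarith [ht.1, hα.2]) ht.2
  have hsin₃ : sin (t + 3 * α) < 0 := by
    rw [← sin_sub_two_pi]
    exact sin_neg_of_neg_of_neg_pi_lt (by linarith [ht.2, hα.2]) (by linarith [ht.1])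
  rw [u_sub_two_mul_cos_mul_u_eq hcos.ne' (cos_two_mul_pos hα).ne' hsin.ne']
  exact div_pos (neg_pos.2 hsin₃) (by positivity)

theorem p_zero_pos {α t : ℝ} (hα : α ∈ Ioo 0 (π / 4)) (ht : t ∈ Ioo 0 (π - 2 * α)) :
    0 < p α 0 t := by
  simp only [p]
  split_ifs with h₁ h₂ h₃
  · exact one_pos
  · exact u_pos ⟨hα.1, by linarith [hα.2, pi_pos]⟩ ⟨ht.1, by linarith [hα.1]⟩
  · exact mul_pos (mul_pos two_pos (cos_two_mul_pos hα))
      (u_pos ⟨by linarith [hα.1], by linarith [hα.2]⟩ ht)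
  · exact absurd ht.2 h₃

theorem p_one_pos {α t : ℝ} (hα : α ∈ Ioo 0 (π / 4)) (ht : t ∈ Ioo (π - 3 * α) (π - α)) :
    0 < p α 1 t := by
  simp only [p]
  split_ifs with h₁ h₂ h₃
  · exact absurd ht.1 (not_lt.2 h₁.le)
  · exact u_sub_two_mul_cos_mul_u_pos hα ⟨ht.1, by linarith [ht.2, hα.1]⟩
  · exact u_pos ⟨hα.1, by linarith [hα.2, pi_pos]⟩ ⟨by linarith [ht.1, hα.2], h₃⟩
  · exact absurd ht.2 h₃

theorem p_two_pos {α t : ℝ} (hα : α ∈ Ioo 0 (π / 4)) (ht : t ∈ Ioo (2 * α) π) :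
    0 < p α 2 t := by
  simp only [p, u_neg]
  split_ifs with h₁ h₂ h₃
  · exact absurd ht.1 (not_lt.2 h₁.le)
  · exact mul_pos (mul_pos two_pos (cos_two_mul_pos hα))
      (u_pos ⟨by linarith [hα.1], by linarith [hα.2]⟩ ⟨by linarith [ht.2], by linarith [ht.1]⟩)
  · exact u_pos ⟨hα.1, by linarith [hα.2, pi_pos]⟩ ⟨by linarith [ht.2], by linarith [hα.1]⟩
  · exact one_pos

theorem p_three_pos {α t : ℝ} (hα : α ∈ Ioo 0 (π / 4)) (ht : t ∈ Ioo α (3 * α)) :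
    0 < p α 3 t := by
  simp only [p, u_neg]
  split_ifs with h₁ h₂ h₃
  · exact absurd ht.1 (not_lt.2 h₁.le)
  · exact u_pos ⟨hα.1, by linarith [hα.2, pi_pos]⟩ ⟨by linarith [hα.2], by linarith [ht.1]⟩
  · exact u_sub_two_mul_cos_mul_u_pos hα ⟨by linarith [ht.2], by linarith [ht.1]⟩
  · exact absurd ht.2 h₃

theorem exists_p_pos_T_mem {α t : ℝ} (hα : α ∈ Ioo 0 (π / 4)) (ht : t ∈ Ioo 0 π) :
    ∃ i, 0 < p α i t ∧ T α i t ∈ Ioo 0 π := by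
  by_cases h : t < π - 2 * α
  · refine ⟨0, p_zero_pos hα ⟨ht.1, h⟩, ?_⟩
    simp only [T]
    constructor <;> linarith [ht.1, hα.1]
  · refine ⟨2, p_two_pos hα ⟨by linarith [hα.2], ht.2⟩, ?_⟩
    simp only [T]
    constructor <;> linarith [ht.2, hα.1, hα.2]

theorem iterT_eq_iterate {α : ℝ} (f : ℝ → Fin 4) (t : ℝ) (j : ℕ) :
    iterT α (fun j => f ((fun s => T α (f s) s)^[j] t)) j t = (fun s => T α (f s) s)^[j] t := by
  induction j with
  | zero => rfl
  | succ j ih =>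
    show T α (f (_ : ℝ)) (iterT α _ j t) = _
    rw [ih, Function.iterate_succ_apply']

theorem exists_forall_p_pos {α t : ℝ} (hα : α ∈ Ioo 0 (π / 4)) (ht : t ∈ Ioo 0 π) :
    ∃ x : ℕ → Fin 4, ∀ j, 0 < p α (x j) (iterT α x j t) := by
  choose! f hf using fun s (hs : s ∈ Ioo 0 π) => exists_p_pos_T_mem hα hs
  have hmaps : MapsTo (fun s => T α (f s) s) (Ioo 0 π) (Ioo 0 π) := fun s hs => (hf s hs).2
  refine ⟨fun j => f ((fun s => T α (f s) s)^[j] t), fun j => ?_⟩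
  rw [iterT_eq_iterate]
  exact (hf _ (hmaps.iterate j ht)).1

theorem iterT_cons (α : ℝ) (i : Fin 4) (y : ℕ → Fin 4) (t : ℝ) (k : ℕ) :
    iterT α (Stream'.cons i y) (k + 1) t = iterT α y k (T α i t) := by
  induction k with
  | zero => rfl
  | succ k ih => exact congrArg (T α (y k)) ih

def Step (α t t' : ℝ) : Prop :=
  t' ∈ Ioo 0 π ∧ ∃ i, 0 < p α i t ∧ T α i t = t'

theorem mem_Ioo_of_reflTransGen {α θ v : ℝ} (hθ : θ ∈ Ioo 0 π)
    (h : Relation.ReflTransGen (Step α) θ v) : v ∈ Ioo 0 π := by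
  rcases h.cases_tail with rfl | ⟨_, _, hstep⟩
  exacts [hθ, hstep.1]

theorem mem_Cset_of_reflTransGen {α θ v : ℝ} (hα : α ∈ Ioo 0 (π / 4)) (hθ : θ ∈ Ioo 0 π)
    (h : Relation.ReflTransGen (Step α) θ v) : v ∈ Cset α θ := by
  have hv := mem_Ioo_of_reflTransGen hθ h
  suffices ∃ x : ℕ → Fin 4, (∀ j, 0 < p α (x j) (iterT α x j θ)) ∧ ∃ k, iterT α x k θ = v by
    obtain ⟨x, hx, k, hk⟩ := this
    exact ⟨hv, x, k, fun n => Finset.prod_pos fun j _ => hx j, hk⟩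
  clear hθ
  induction h using Relation.ReflTransGen.head_induction_on with
  | refl =>
    obtain ⟨x, hx⟩ := exists_forall_p_pos hα hv
    exact ⟨x, hx, 0, rfl⟩
  | head hstep _ ih =>
    obtain ⟨-, i, hi, rfl⟩ := hstep
    obtain ⟨y, hy, k, hk⟩ := ih
    refine ⟨Stream'.cons i y, fun j => ?_, k + 1, by rw [iterT_cons, hk]⟩
    cases j with
    | zero => exact hi
    | succ j => rw [iterT_cons]; exact hy j

theorem step_add_two_mul {α t : ℝ} (hα : α ∈ Ioo 0 (π / 4)) (ht : t ∈ Ioo 0 (π - 2 * α)) :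
    Step α t (t + 2 * α) :=
  ⟨⟨by linarith [ht.1, hα.1], by linarith [ht.2]⟩, 0, p_zero_pos hα ht, rfl⟩

theorem step_sub_two_mul {α t : ℝ} (hα : α ∈ Ioo 0 (π / 4)) (ht : t ∈ Ioo (2 * α) π) :
    Step α t (t - 2 * α) :=
  ⟨⟨by linarith [ht.1], by linarith [ht.2, hα.1]⟩, 2, p_two_pos hα ht, rfl⟩

theorem step_four_mul_sub {α t : ℝ} (hα : α ∈ Ioo 0 (π / 4)) (ht : t ∈ Ioo α (3 * α)) :
    Step α t (4 * α - t) :=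
  ⟨⟨by linarith [ht.2, hα.1], by linarith [ht.1, hα.2, pi_pos]⟩, 3, p_three_pos hα ht,
    by simp only [T]; ring⟩

theorem step_two_pi_sub {α t : ℝ} (hα : α ∈ Ioo 0 (π / 4))
    (ht : t ∈ Ioo (π - 3 * α) (π - α)) :
    Step α t (2 * π - 4 * α - t) :=
  ⟨⟨by linarith [ht.2, hα.2, pi_pos], by linarith [ht.1, hα.1]⟩, 1, p_one_pos hα ht,
    by simp only [T]; ring⟩

theorem reflTransGen_of_modEq {α θ v w : ℝ} (hα : α ∈ Ioo 0 (π / 4)) (hθ : θ ∈ Ioo 0 π)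
    (hv : Relation.ReflTransGen (Step α) θ v) (hvw : v ≡ w [PMOD 2 * α]) (hw : w ∈ Ioo 0 π) :
    Relation.ReflTransGen (Step α) θ w := by
  have hvI := mem_Ioo_of_reflTransGen hθ hv
  obtain ⟨z, hz⟩ := modEq_iff_exists_int_mul.1 hvw
  obtain rfl : w = v + z * (2 * α) := by linarith
  clear hvw hz
  induction z using Int.induction_on with
  | zero => simpa using hv
  | succ n ih =>
    push_cast at hw ih ⊢
    have hnα : 0 ≤ (n : ℝ) * α := mul_nonneg n.cast_nonneg hα.1.le
    have hn : v + n * (2 * α) ∈ Ioo 0 π := ⟨by linarith [hvI.1], by linarith [hw.2, hα.1]⟩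
    have hstep := step_add_two_mul hα ⟨hn.1, by linarith [hw.2]⟩
    rw [show v + (n + 1) * (2 * α) = v + n * (2 * α) + 2 * α by ring]
    exact (ih hn).tail hstep
  | pred n ih =>
    push_cast at hw ih ⊢
    have hnα : 0 ≤ (n : ℝ) * α := mul_nonneg n.cast_nonneg hα.1.le
    have hn : v + -n * (2 * α) ∈ Ioo 0 π := ⟨by linarith [hw.1, hα.1], by linarith [hvI.2]⟩
    have hstep := step_sub_two_mul hα ⟨by linarith [hw.1], hn.2⟩
    rw [show v + (-n - 1) * (2 * α) = v + -n * (2 * α) - 2 * α by ring]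
    exact (ih hn).tail hstep

def ReachesClass (α θ c : ℝ) : Prop :=
  ∃ v, Relation.ReflTransGen (Step α) θ v ∧ v ≡ c [PMOD 2 * α]

namespace ReachesClass

variable {α θ c : ℝ}

theorem neg (hα : α ∈ Ioo 0 (π / 4)) (hθ : θ ∈ Ioo 0 π) (hc : ReachesClass α θ c)
    (hbad : ¬ α ≡ c [PMOD 2 * α]) : ReachesClass α θ (-c) := by
  obtain ⟨v, hv, hvc⟩ := hc
  obtain ⟨w, hw, hwc⟩ := exists_modEq_mem_Ioo (by linarith [hα.1]) hbad
  have hwI : w ∈ Ioo α (3 * α) := ⟨hw.1, by linarith [hw.2]⟩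
  have hvw := reflTransGen_of_modEq hα hθ hv (hvc.trans hwc.symm)
    ⟨by linarith [hw.1, hα.1], by linarith [hw.2, hα.2, pi_pos]⟩
  refine ⟨4 * α - w, hvw.tail (step_four_mul_sub hα hwI), ?_⟩
  obtain ⟨z, hz⟩ := modEq_iff_exists_int_mul.1 hwc
  exact modEq_iff_exists_int_mul.2 ⟨-z - 2, by push_cast; linarith⟩

theorem two_pi_sub (hα : α ∈ Ioo 0 (π / 4)) (hθ : θ ∈ Ioo 0 π) (hc : ReachesClass α θ c)
    (hbad : ¬ π - 3 * α ≡ c [PMOD 2 * α]) : ReachesClass α θ (2 * π - c) := by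
  obtain ⟨v, hv, hvc⟩ := hc
  obtain ⟨w, hw, hwc⟩ := exists_modEq_mem_Ioo (by linarith [hα.1]) hbad
  have hwI : w ∈ Ioo (π - 3 * α) (π - α) := ⟨hw.1, by linarith [hw.2]⟩
  have hvw := reflTransGen_of_modEq hα hθ hv (hvc.trans hwc.symm)
    ⟨by linarith [hw.1, hα.2, pi_pos], by linarith [hw.2, hα.1]⟩
  refine ⟨2 * π - 4 * α - w, hvw.tail (step_two_pi_sub hα hwI), ?_⟩
  obtain ⟨z, hz⟩ := modEq_iff_exists_int_mul.1 hwc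
  exact modEq_iff_exists_int_mul.2 ⟨-z + 2, by push_cast; linarith⟩

theorem add_two_pi (hα : α ∈ Ioo 0 (π / 4)) (hθ : θ ∈ Ioo 0 π) (hc : ReachesClass α θ c)
    (hbad₀ : ¬ α ≡ c [PMOD 2 * α]) (hbad₁ : ¬ α ≡ c + π [PMOD 2 * α]) :
    ReachesClass α θ (c + 2 * π) := by
  have hbad : ¬ π - 3 * α ≡ -c [PMOD 2 * α] := fun h => hbad₁ <| by
    obtain ⟨z, hz⟩ := modEq_iff_exists_int_mul.1 h
    exact modEq_iff_exists_int_mul.2 ⟨1 - z, by push_cast; linarith⟩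
  simpa [add_comm] using (hc.neg hα hθ hbad₀).two_pi_sub hα hθ hbad

theorem sub_two_pi (hα : α ∈ Ioo 0 (π / 4)) (hθ : θ ∈ Ioo 0 π) (hc : ReachesClass α θ c)
    (hbad₀ : ¬ α ≡ c - π [PMOD 2 * α]) (hbad₁ : ¬ α ≡ c - 2 * π [PMOD 2 * α]) :
    ReachesClass α θ (c - 2 * π) := by
  have hbad : ¬ π - 3 * α ≡ c [PMOD 2 * α] := fun h => hbad₀ <| by
    obtain ⟨z, hz⟩ := modEq_iff_exists_int_mul.1 h
    exact modEq_iff_exists_int_mul.2 ⟨z - 2, by push_cast; linarith⟩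
  have hbad' : ¬ α ≡ 2 * π - c [PMOD 2 * α] := fun h => hbad₁ <| by
    obtain ⟨z, hz⟩ := modEq_iff_exists_int_mul.1 h
    exact modEq_iff_exists_int_mul.2 ⟨-z - 1, by push_cast; linarith⟩
  simpa using (hc.two_pi_sub hα hθ hbad).neg hα hθ hbad'

end ReachesClass

theorem reachesClass_add_nat_mul_two_pi {α θ : ℝ} (hα : α ∈ Ioo 0 (π / 4)) (hθ : θ ∈ Ioo 0 π)
    (hbad : ∀ n : ℤ, 0 ≤ n → ¬ α ≡ θ + n * π [PMOD 2 * α]) (k : ℕ) :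
    ReachesClass α θ (θ + k * (2 * π)) := by
  induction k with
  | zero => exact ⟨θ, .refl, by simp⟩
  | succ k ih =>
    have h₀ := hbad (2 * k) (by positivity)
    have h₁ := hbad (2 * k + 1) (by positivity)
    push_cast at h₀ h₁ ⊢
    rw [show θ + (k + 1) * (2 * π) = θ + k * (2 * π) + 2 * π by ring]
    refine ih.add_two_pi hα hθ ?_ ?_
    · convert h₀ using 2; ring
    · convert h₁ using 2; ring

theorem reachesClass_sub_nat_mul_two_pi {α θ : ℝ} (hα : α ∈ Ioo 0 (π / 4)) (hθ : θ ∈ Ioo 0 π)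
    (hbad : ∀ n : ℤ, n < 0 → ¬ α ≡ θ + n * π [PMOD 2 * α]) (k : ℕ) :
    ReachesClass α θ (θ - k * (2 * π)) := by
  induction k with
  | zero => exact ⟨θ, .refl, by simp⟩
  | succ k ih =>
    have h₀ := hbad (-2 * k - 1) (by omega)
    have h₁ := hbad (-2 * k - 2) (by omega)
    push_cast at h₀ h₁ ⊢
    rw [show θ - (k + 1) * (2 * π) = θ - k * (2 * π) - 2 * π by ring]
    refine ih.sub_two_pi hα hθ ?_ ?_
    · convert h₀ using 2; ring
    · convert h₁ using 2; ring

theorem infinite_setOf_reachesClass {α β θ : ℝ} (hα : α ∈ Ioo 0 (π / 4)) (hβ : Irrational β)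
    (hαβ : α = β * π) (hθ : θ ∈ Ioo 0 π) :
    {m : ℤ | ReachesClass α θ (θ + m * (2 * π))}.Infinite := by
  have hbad : {n : ℤ | α ≡ θ + n * π [PMOD 2 * α]}.Subsingleton := fun m hm n hn =>
    int_eq_of_mul_pi_modEq hβ hαβ ((AddCommGroup.ModEq.trans hm.symm hn).add_left_cancel' θ)
  by_cases hdown : ∃ n₀ : ℤ, 0 ≤ n₀ ∧ α ≡ θ + n₀ * π [PMOD 2 * α]
  · obtain ⟨n₀, hn₀, hbad₀⟩ := hdown
    have hneg : ∀ n : ℤ, n < 0 → ¬ α ≡ θ + n * π [PMOD 2 * α] := fun n hn h => by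
      have : n = n₀ := hbad h hbad₀
      omega
    refine Set.infinite_of_not_bddBelow fun ⟨b, hb⟩ => ?_
    obtain ⟨k, hk⟩ : ∃ k : ℕ, -(k : ℤ) < b := ⟨b.natAbs + 1, by omega⟩
    refine hk.not_ge (hb ?_)
    rw [Set.mem_ofPred_eq, Int.cast_neg, Int.cast_natCast, neg_mul, ← sub_eq_add_neg]
    exact reachesClass_sub_nat_mul_two_pi hα hθ hneg k
  · have hnonneg : ∀ n : ℤ, 0 ≤ n → ¬ α ≡ θ + n * π [PMOD 2 * α] := fun n hn h =>
      hdown ⟨n, hn, h⟩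
    refine Set.infinite_of_not_bddAbove fun ⟨b, hb⟩ => ?_
    obtain ⟨k, hk⟩ : ∃ k : ℕ, b < k := ⟨b.toNat + 1, by omega⟩
    refine hk.not_ge (hb ?_)
    rw [Set.mem_ofPred_eq, Int.cast_natCast]
    exact reachesClass_add_nat_mul_two_pi hα hθ hnonneg k

theorem infinite_Cset {α β θ : ℝ} (hα : α ∈ Ioo 0 (π / 4)) (hβ : Irrational β)
    (hαβ : α = β * π) (hθ : θ ∈ Ioo 0 π) : (Cset α θ).Infinite := by
  choose! f hfR hf using fun (m : ℤ) (hm : ReachesClass α θ (θ + m * (2 * π))) => hm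
  refine Set.infinite_of_injOn_mapsTo (fun m hm n hn hmn => ?_)
    (fun m hm => mem_Cset_of_reflTransGen hα hθ (hfR m hm))
    (infinite_setOf_reachesClass hα hβ hαβ hθ)
  have hmn' : m * (2 * π) ≡ n * (2 * π) [PMOD 2 * α] :=
    ((hf m hm).symm.trans (hmn ▸ hf n hn)).add_left_cancel' θ
  have := int_eq_of_mul_pi_modEq hβ hαβ (m := 2 * m) (n := 2 * n) <| by
    convert hmn' using 1 <;> push_cast <;> ring
  omega

theorem exists_iterT_eq (α θ : ℝ) (x : ℕ → Fin 4) (k : ℕ) :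
    ∃ m n : ℤ, iterT α x k θ = θ + m * α + n * π ∨ iterT α x k θ = -θ + m * α + n * π := by
  induction k with
  | zero => exact ⟨0, 0, Or.inl (by simp [iterT])⟩
  | succ k ih =>
    simp only [iterT]
    generalize x k = i
    obtain ⟨m, n, h | h⟩ := ih <;> rw [h] <;> fin_cases i
    · exact ⟨m + 2, n, Or.inl (by simp [T]; ring)⟩
    · exact ⟨-m - 4, -n + 2, Or.inr (by simp [T]; ring)⟩
    · exact ⟨m - 2, n, Or.inl (by simp [T]; ring)⟩
    · exact ⟨-m + 4, -n, Or.inr (by simp [T]; ring)⟩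
    · exact ⟨m + 2, n, Or.inr (by simp [T]; ring)⟩
    · exact ⟨-m - 4, -n + 2, Or.inl (by simp [T]; ring)⟩
    · exact ⟨m - 2, n, Or.inr (by simp [T]; ring)⟩
    · exact ⟨-m + 4, -n, Or.inl (by simp [T]; ring)⟩

theorem countable_Cset (α θ : ℝ) : (Cset α θ).Countable := by
  refine ((countable_range fun q : ℤ × ℤ => θ + q.1 * α + q.2 * π).union
    (countable_range fun q : ℤ × ℤ => -θ + q.1 * α + q.2 * π)).mono ?_
  rintro v ⟨-, x, k, -, rfl⟩
  obtain ⟨m, n, h | h⟩ := exists_iterT_eq α θ x k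
  exacts [Or.inl ⟨(m, n), h.symm⟩, Or.inr ⟨(m, n), h.symm⟩]

end RandomBilliard

/-- if `α = βπ` with `β` irrational, then `C(θ)` is countably infinite
for every `θ ∈ (0, π)`. -/
theorem Cset_countably_infinite_of_irrational (α β : ℝ) (hα : α ∈ Set.Ioo 0 (π / 6))
    (hβ : Irrational β) (hαβ : α = β * π) :
    ∀ θ ∈ Set.Ioo 0 π, (Cset α θ).Countable ∧ (Cset α θ).Infinite := by
  have hα' : α ∈ Ioo 0 (π / 4) := ⟨hα.1, by linarith [hα.2, pi_pos]⟩
  exact fun θ hθ => ⟨countable_Cset α θ, infinite_Cset hα' hβ hαβ hθ⟩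
end
end

section
/- Suppose α = (m/n)π with m, n positive integers and gcd(m,n) = 1. Let I_j = ((2j−1)π/(2n) − π/(4n), (2j−1)π/(2n) + π/(4n)) for j = 1, …, n, and let W = ∪_{j=1}^n I_j. Then W is invariant under the Feres random map: for every θ ∈ W and every k ∈ {1,2,3,4} with p_k(θ) > 0, one has T_k(θ) ∈ W; moreover, for each such k and each j ∈ {1,…,n} there exists l ∈ {1,…,n} with T_k(I_j ∩ {p_k > 0}) ⊆ I_l. -/
open Real MeasureTheory Set Filter Topology
open scoped ENNReal NNReal

noncomputable section

open RandomBilliard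

/-!
Put `s = π / (4n)`, so that `α = 4ms`, `π = 4ns` and `I_j` is the open interval of radius `s`
around `(4j - 2)s`. The maps `T_k` are translations by `±8ms` and reflections about multiples of
`2s`, so each of them carries every such interval onto another one. Where `p_k > 0`, the map `T_k`
keeps `[0, π]` inside `[0, π]`, and an interval of this family meeting `[0, π]` has index in
`1, …, n`.
-/

namespace RandomBilliard

def cell (s : ℝ) (j : ℤ) : Set ℝ := Ioo ((4 * j - 3) * s) ((4 * j - 1) * s)

lemma cell_subset_Icc {s : ℝ} {n j : ℤ} (hs : 0 < s) (hj : j ∈ Icc 1 n) :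
    cell s j ⊆ Icc 0 (4 * n * s) := by
  obtain ⟨h1, hn⟩ := hj
  have h1' : (1 : ℝ) ≤ j := by exact_mod_cast h1
  have hn' : (j : ℝ) ≤ n := by exact_mod_cast hn
  rintro x ⟨hl, hr⟩
  constructor <;> nlinarith

lemma mem_Icc_of_mem_cell {s x : ℝ} {n l : ℤ} (hs : 0 < s) (hx : x ∈ cell s l)
    (hx0 : x ∈ Icc 0 (4 * n * s)) : l ∈ Icc 1 n := by
  obtain ⟨hl, hr⟩ := hx
  have h1 : (0 : ℝ) < 4 * l - 1 := lt_of_mul_lt_mul_right (by linarith [hx0.1]) hs.le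
  have h2 : (4 * l - 3 : ℝ) < 4 * n := lt_of_mul_lt_mul_right (by linarith [hx0.2]) hs.le
  have h1' : (0 : ℤ) < 4 * l - 1 := by exact_mod_cast h1
  have h2' : 4 * l - 3 < 4 * n := by exact_mod_cast h2
  constructor <;> omega

lemma T_mem_Icc_of_p_pos {α θ : ℝ} {k : Fin 4} (hα0 : 0 ≤ α) (hα3 : 3 * α ≤ π)
    (hθ : θ ∈ Icc 0 π) (hp : 0 < p α k θ) : T α k θ ∈ Icc 0 π := by
  obtain ⟨h0, hπ⟩ := hθ
  fin_cases k <;> simp only [p] at hp <;> split_ifs at hp <;>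
    simp only [T, mem_Icc] <;> constructor <;> linarith

def cellTarget (m n : ℤ) : Fin 4 → ℤ → ℤ
  | 0 => fun j => j + 2 * m
  | 1 => fun j => 2 * n - 4 * m + 1 - j
  | 2 => fun j => j - 2 * m
  | 3 => fun j => 4 * m + 1 - j

lemma mapsTo_T_cell {α s : ℝ} {m n : ℤ} (hα : α = 4 * m * s) (hπ : π = 4 * n * s)
    (k : Fin 4) (j : ℤ) : MapsTo (T α k) (cell s j) (cell s (cellTarget m n k j)) := by
  rintro θ ⟨hl, hr⟩
  fin_cases k <;> simp only [T, cellTarget, cell, mem_Ioo] <;> push_cast <;>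
    constructor <;> linarith

lemma cellTarget_mem_Icc {α s θ : ℝ} {m n j : ℤ} {k : Fin 4} (hs : 0 < s)
    (hα : α = 4 * m * s) (hπ : π = 4 * n * s) (hα0 : 0 ≤ α) (hα3 : 3 * α ≤ π)
    (hj : j ∈ Icc 1 n) (hθ : θ ∈ cell s j) (hp : 0 < p α k θ) :
    cellTarget m n k j ∈ Icc 1 n := by
  have hθπ : θ ∈ Icc 0 π := hπ ▸ cell_subset_Icc hs hj hθ
  exact mem_Icc_of_mem_cell hs (mapsTo_T_cell hα hπ k j hθ)
    (hπ ▸ T_mem_Icc_of_p_pos hα0 hα3 hθπ hp)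

lemma exists_mapsTo_cell_of_p_pos {α s θ : ℝ} {m n j : ℕ} {k : Fin 4} (hs : 0 < s)
    (hα : α = 4 * m * s) (hπ : π = 4 * n * s) (hα0 : 0 ≤ α) (hα3 : 3 * α ≤ π)
    (hj : j ∈ Finset.Icc 1 n) (hθ : θ ∈ cell s j) (hp : 0 < p α k θ) :
    ∃ l ∈ Finset.Icc 1 n, MapsTo (T α k) (cell s j) (cell s l) := by
  have hj' : (j : ℤ) ∈ Icc 1 (n : ℤ) := by
    simp only [Finset.mem_Icc, mem_Icc] at hj ⊢; omega
  have hα' : α = 4 * ((m : ℤ) : ℝ) * s := by exact_mod_cast hα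
  have hπ' : π = 4 * ((n : ℤ) : ℝ) * s := by exact_mod_cast hπ
  have ht := cellTarget_mem_Icc hs hα' hπ' hα0 hα3 hj' hθ hp
  lift cellTarget m n k j to ℕ using (by linarith [ht.1]) with l hl
  refine ⟨l, ?_, hl ▸ mapsTo_T_cell hα' hπ' k j⟩
  simp only [Finset.mem_Icc, mem_Icc] at ht ⊢
  omega

end RandomBilliard

theorem union_intervals_invariant_general (α : ℝ) (hα : α ∈ Set.Ioo 0 (π / 6))
    (m n : ℕ)
    (hrat : α = (m : ℝ) / (n : ℝ) * π)
    (I : ℕ → Set ℝ)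
    (hI : ∀ j : ℕ, I j =
      Set.Ioo ((2 * (j : ℝ) - 1) * π / (2 * (n : ℝ)) - π / (4 * (n : ℝ)))
              ((2 * (j : ℝ) - 1) * π / (2 * (n : ℝ)) + π / (4 * (n : ℝ))))
    (W : Set ℝ) (hW : W = ⋃ j ∈ Finset.Icc 1 n, I j) :
    (∀ θ ∈ W, ∀ k : Fin 4, 0 < p α k θ → T α k θ ∈ W) ∧
    (∀ k : Fin 4, ∀ j ∈ Finset.Icc 1 n, ∃ l ∈ Finset.Icc 1 n,
      T α k '' (I j ∩ {θ | 0 < p α k θ}) ⊆ I l) := by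
  obtain ⟨hα0, hα6⟩ := hα
  have hn : 0 < n := Nat.pos_of_ne_zero fun h => by simp [h] at hrat; linarith
  obtain ⟨s, hs_def⟩ : ∃ s, s = π / (4 * n) := ⟨_, rfl⟩
  have hs : 0 < s := hs_def ▸ by positivity
  have hπs : π = 4 * n * s := by rw [hs_def]; field_simp
  have hαs : α = 4 * m * s := by rw [hrat, hπs]; field_simp
  have hIcell (j : ℕ) : I j = cell s j := by
    rw [hI, cell, hπs]; push_cast; congr 1 <;> field_simp <;> ring
  have key : ∀ k, ∀ j ∈ Finset.Icc 1 n, ∀ θ ∈ I j, 0 < p α k θ →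
      ∃ l ∈ Finset.Icc 1 n, MapsTo (T α k) (I j) (I l) := by
    intro k j hj θ hθ hp
    simp only [hIcell] at hθ ⊢
    exact exists_mapsTo_cell_of_p_pos hs hαs hπs hα0.le (by linarith) hj hθ hp
  refine ⟨fun θ hθ k hp => ?_, fun k j hj => ?_⟩
  · rw [hW, mem_iUnion₂] at hθ ⊢
    obtain ⟨j, hj, hθj⟩ := hθ
    obtain ⟨l, hl, hmaps⟩ := key k j hj θ hθj hp
    exact ⟨l, hl, hmaps hθj⟩
  · rcases (I j ∩ {θ | 0 < p α k θ}).eq_empty_or_nonempty with he | ⟨θ, hθj, hp⟩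
    · exact ⟨1, Finset.mem_Icc.mpr ⟨le_rfl, hn⟩, by simp [he]⟩
    · obtain ⟨l, hl, hmaps⟩ := key k j hj θ hθj hp
      exact ⟨l, hl, (hmaps.mono_left inter_subset_left).image_subset⟩

/-- for `α = (m/n)π` with `gcd(m, n) = 1`, the union
`W = ∪_{j=1}^n I_j` of the intervals `I_j = ((2j-1)π/(2n) - π/(4n), (2j-1)π/(2n) + π/(4n))`
is invariant under the Feres random map, and each `I_j` is mapped into some `I_l`. -/
theorem union_intervals_invariant (α : ℝ) (hα : α ∈ Set.Ioo 0 (π / 6))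
    (m n : ℕ) (hm : 0 < m) (hn : 0 < n) (hcop : Nat.Coprime m n)
    (hrat : α = (m : ℝ) / (n : ℝ) * π)
    (I : ℕ → Set ℝ)
    (hI : ∀ j : ℕ, I j =
      Set.Ioo ((2 * (j : ℝ) - 1) * π / (2 * (n : ℝ)) - π / (4 * (n : ℝ)))
              ((2 * (j : ℝ) - 1) * π / (2 * (n : ℝ)) + π / (4 * (n : ℝ))))
    (W : Set ℝ) (hW : W = ⋃ j ∈ Finset.Icc 1 n, I j) :
    (∀ θ ∈ W, ∀ k : Fin 4, 0 < p α k θ → T α k θ ∈ W) ∧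
    (∀ k : Fin 4, ∀ j ∈ Finset.Icc 1 n, ∃ l ∈ Finset.Icc 1 n,
      T α k '' (I j ∩ {θ | 0 < p α k θ}) ⊆ I l) :=
  union_intervals_invariant_general α hα m n hrat I hI W hW
end
end
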